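/- arXiv:2506.09004 — 4 statements merged into one kernel-verified Lean document; each statement's English description precedes it below -/
import Mathlib

section
/- If every item in a sequence has size at most α < 1, and the Dual Next Fit strategy covers m bins on this sequence, then m > |OPT(σ)|/(1+α) − 1/(1+α), where |OPT(σ)| is the maximum number of unit bins coverable by the sequence. -/
/-- State of Dual Next Fit after processing a list of items:
    (number of covered bins, load of the current active bin). -/
noncomputable def dnfState (l : List ℝ) : ℕ × ℝ :=
  l.foldl (fun s v => if 1 ≤ s.2 + v then (s.1 + 1, 0) else (s.1, s.2 + v)) (0, 0)

/-- The items of the list can (offline) cover `k` unit bins. -/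
def Covers (l : List ℝ) (k : ℕ) : Prop :=
  ∃ f : Fin l.length → ℕ,
    ∀ j < k, 1 ≤ ∑ i : Fin l.length, if f i = j then l.get i else 0

/-!
Every bin closed by Dual Next Fit has load below `1 + α`, since it was still uncovered before
its last item arrived, and the active bin at the end has load below `1`. Hence the total size
of the items is less than `(1 + α) m + 1`. On the other hand, `N` disjoint covered bins need
total size at least `N`.
-/

theorem Covers.natCast_le_sum {l : List ℝ} {N : ℕ} (hl : ∀ v ∈ l, 0 ≤ v) (hN : Covers l N) :
    (N : ℝ) ≤ l.sum := by
  obtain ⟨f, hf⟩ := hN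
  calc (N : ℝ) = ∑ _j ∈ Finset.range N, (1 : ℝ) := by simp
    _ ≤ ∑ j ∈ Finset.range N, ∑ i : Fin l.length, if f i = j then l.get i else 0 :=
        Finset.sum_le_sum fun j hj => hf j (Finset.mem_range.mp hj)
    _ = ∑ i : Fin l.length, if f i ∈ Finset.range N then l.get i else 0 := by
        rw [Finset.sum_comm]
        exact Finset.sum_congr rfl fun i _ => Finset.sum_ite_eq (Finset.range N) (f i) _
    _ ≤ ∑ i : Fin l.length, l.get i :=
        Finset.sum_le_sum fun i _ => by
          split_ifs
          exacts [le_rfl, hl _ (l.get_mem i)]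
    _ = l.sum := Fin.sum_univ_getElem l

namespace DualNextFit

noncomputable def step (p : ℕ × ℝ) (v : ℝ) : ℕ × ℝ :=
  if 1 ≤ p.2 + v then (p.1 + 1, 0) else (p.1, p.2 + v)

theorem dnfState_eq_foldl_step (l : List ℝ) : dnfState l = l.foldl step (0, 0) := rfl

def potential (α : ℝ) (p : ℕ × ℝ) : ℝ := p.1 * (1 + α) + p.2

theorem step_invariant {α v : ℝ} {p : ℕ × ℝ} (hp : p.2 < 1) (hv : v ≤ α) :
    (step p v).2 < 1 ∧ potential α p + v ≤ potential α (step p v) := by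
  unfold step potential
  split_ifs with hcov
  · push_cast
    constructor <;> linarith
  · exact ⟨lt_of_not_ge hcov, by linarith⟩

theorem foldl_step_invariant {α : ℝ} (l : List ℝ) (hl : ∀ v ∈ l, v ≤ α) {p : ℕ × ℝ}
    (hp : p.2 < 1) :
    (l.foldl step p).2 < 1 ∧ potential α p + l.sum ≤ potential α (l.foldl step p) := by
  induction l generalizing p with
  | nil => simpa using hp
  | cons v t ih =>
    obtain ⟨hp', hstep⟩ := step_invariant hp (hl v List.mem_cons_self)
    obtain ⟨hload, hpot⟩ := ih (fun w hw => hl w (List.mem_cons_of_mem v hw)) hp'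
    rw [List.foldl_cons, List.sum_cons]
    exact ⟨hload, by linarith⟩

theorem sum_lt_dnfState {α : ℝ} {l : List ℝ} (hl : ∀ v ∈ l, v ≤ α) :
    l.sum < (dnfState l).1 * (1 + α) + 1 := by
  obtain ⟨hload, hpot⟩ := foldl_step_invariant l hl (p := (0, 0)) zero_lt_one
  rw [← dnfState_eq_foldl_step] at hload hpot
  simp only [potential, CharP.cast_eq_zero, zero_mul, add_zero, zero_add] at hpot
  linarith

end DualNextFit

theorem stmt0_general (α : ℝ) (hα0 : 0 < α) (l : List ℝ)
    (hitems : ∀ v ∈ l, 0 < v ∧ v < 1 ∧ v ≤ α)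
    (m N : ℕ) (hm : (dnfState l).1 = m) (hN : Covers l N) :
    (N : ℝ) / (1 + α) - 1 / (1 + α) < m := by
  have hN_le : (N : ℝ) ≤ l.sum := hN.natCast_le_sum fun v hv => (hitems v hv).1.le
  have hsum_lt := DualNextFit.sum_lt_dnfState fun v hv => (hitems v hv).2.2
  rw [hm] at hsum_lt
  rw [div_sub_div_same, div_lt_iff₀ (by linarith)]
  linarith

theorem stmt0 (α : ℝ) (hα0 : 0 < α) (hα1 : α < 1) (l : List ℝ)
    (hitems : ∀ v ∈ l, 0 < v ∧ v < 1 ∧ v ≤ α)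
    (m N : ℕ) (hm : (dnfState l).1 = m) (hN : Covers l N) :
    (N : ℝ) / (1 + α) - 1 / (1 + α) < m :=
  stmt0_general α hα0 l hitems m N hm hN
end

section
/- Let G₂, G₂₂ be nonnegative integers with G₂ > 0, let β ≥ 1 satisfy G₂₂ + G₂ = β·G₂ and β < 121/107, let 0 < ε < 1 be sufficiently small, and set m_R = ⌊(1−ε)²(27G₂/121 + 2G₂₂/3)⌋ and m = ⌈(1+ε)m_R⌉, n_g = G₂ − 2m. If α ≤ 685/1452 − β/3 − δ/4 − ε/4 for some δ ≥ 0, then n_g − 3(⌊α·G₂⌋ − 2) − ⌊δ·G₂⌋ ≥ ⌊α·G₂⌋ − 1. -/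
/-!
Since `(1 + ε)(1 - ε)² ≤ 1`, the rounded reserve `m` exceeds `c = 27 G₂/121 + 2 G₂₂/3` by less
than one, and `G₂₂ = (β - 1) G₂` gives `2c = (54/121 + 4(β - 1)/3) G₂`. The constants are tuned so
that `4 · 685/1452 + 54/121 - 4/3 = 1` exactly, hence `4 α G₂ + 2c + δ G₂ ≤ (1 - ε) G₂`, and the
floors only lose a bounded integer amount, which the `-2` in each of the three subsequences covers.
-/

lemma one_add_mul_one_sub_sq_le_one {ε : ℝ} (hε₀ : 0 ≤ ε) (hε₁ : ε ≤ 1) :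
    (1 + ε) * (1 - ε) ^ 2 ≤ 1 := by
  nlinarith [mul_nonneg (mul_nonneg hε₀ hε₀) (sub_nonneg.2 hε₁)]

lemma ceil_one_add_mul_floor_one_sub_sq_mul_lt {ε c : ℝ} (hε₀ : 0 ≤ ε) (hε₁ : ε ≤ 1)
    (hc : 0 ≤ c) : (⌈(1 + ε) * (⌊(1 - ε) ^ 2 * c⌋ : ℝ)⌉ : ℝ) < c + 1 :=
  calc (⌈(1 + ε) * (⌊(1 - ε) ^ 2 * c⌋ : ℝ)⌉ : ℝ)
      < (1 + ε) * (⌊(1 - ε) ^ 2 * c⌋ : ℝ) + 1 := Int.ceil_lt_add_one _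
    _ ≤ (1 + ε) * ((1 - ε) ^ 2 * c) + 1 := by gcongr; exact Int.floor_le _
    _ = (1 + ε) * (1 - ε) ^ 2 * c + 1 := by ring
    _ ≤ c + 1 := by
      gcongr
      exact mul_le_of_le_one_left hc (one_add_mul_one_sub_sq_le_one hε₀ hε₁)

lemma four_mul_add_two_mul_reserve_add_le {G₂ G₂₂ β ε δ α : ℝ} (hG₂ : 0 ≤ G₂)
    (hβ : G₂₂ + G₂ = β * G₂) (hα : α ≤ 685 / 1452 - β / 3 - δ / 4 - ε / 4) :
    4 * (α * G₂) + 2 * (27 * G₂ / 121 + 2 * G₂₂ / 3) + δ * G₂ ≤ (1 - ε) * G₂ :=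
  calc 4 * (α * G₂) + 2 * (27 * G₂ / 121 + 2 * G₂₂ / 3) + δ * G₂
      ≤ 4 * ((685 / 1452 - β / 3 - δ / 4 - ε / 4) * G₂) + 2 * (27 * G₂ / 121 + 2 * G₂₂ / 3)
          + δ * G₂ := by gcongr
    _ = (1 - ε) * G₂ := by linear_combination (4 / 3 : ℝ) * hβ

theorem stmt6_general (G2 G22 : ℕ) (β : ℝ)
    (hβeq : (G22 : ℝ) + G2 = β * G2) :
    ∃ ε₀ : ℝ, 0 < ε₀ ∧ ∀ ε : ℝ, 0 < ε → ε < ε₀ →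
      ∀ δ α : ℝ, 0 ≤ δ → α ≤ 685 / 1452 - β / 3 - δ / 4 - ε / 4 →
        (⌊α * (G2 : ℝ)⌋ - 1 : ℤ) ≤
          ((G2 : ℤ) - 2 * ⌈(1 + ε) * ((⌊(1 - ε) ^ 2 * (27 * (G2 : ℝ) / 121 + 2 * (G22 : ℝ) / 3)⌋ : ℤ) : ℝ)⌉)
            - 3 * (⌊α * (G2 : ℝ)⌋ - 2) - ⌊δ * (G2 : ℝ)⌋ := by
  refine ⟨1, one_pos, fun ε hε hε₁ δ α _ hα => ?_⟩
  have hG₂ : (0 : ℝ) ≤ G2 := Nat.cast_nonneg G2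
  have hm := ceil_one_add_mul_floor_one_sub_sq_mul_lt hε.le hε₁.le
    (by positivity : (0 : ℝ) ≤ 27 * (G2 : ℝ) / 121 + 2 * (G22 : ℝ) / 3)
  have hbudget := four_mul_add_two_mul_reserve_add_le hG₂ hβeq hα
  have hαG := Int.floor_le (α * (G2 : ℝ))
  have hδG := Int.floor_le (δ * (G2 : ℝ))
  rw [← Int.cast_le (R := ℝ)]
  push_cast
  linarith [mul_nonneg hε.le hG₂]

theorem stmt6 (G2 G22 : ℕ) (hG2 : 0 < G2) (β : ℝ) (hβ1 : 1 ≤ β)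
    (hβeq : (G22 : ℝ) + G2 = β * G2) (hβ2 : β < 121 / 107) :
    ∃ ε₀ : ℝ, 0 < ε₀ ∧ ∀ ε : ℝ, 0 < ε → ε < ε₀ →
      ∀ δ α : ℝ, 0 ≤ δ → α ≤ 685 / 1452 - β / 3 - δ / 4 - ε / 4 →
        (⌊α * (G2 : ℝ)⌋ - 1 : ℤ) ≤
          ((G2 : ℤ) - 2 * ⌈(1 + ε) * ((⌊(1 - ε) ^ 2 * (27 * (G2 : ℝ) / 121 + 2 * (G22 : ℝ) / 3)⌋ : ℤ) : ℝ)⌉)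
            - 3 * (⌊α * (G2 : ℝ)⌋ - 2) - ⌊δ * (G2 : ℝ)⌋ :=
  stmt6_general G2 G22 β hβeq
end

section
/- Let W be a finite multiset of positive reals ('white items'), each less than d' where d' ≥ d > 0, and let m_W bins be filled by Dual Worst Fit (each arriving item goes to the bin with the current smallest total). Suppose the total S_W of all items in W satisfies S_W ≥ 2·m_W·d + Σ_{i=1}^{l}(a_i − d), where a_1,…,a_l are the sizes of the items of size ≥ d and l < m_W. Then after processing all of W it is impossible that some bin has total less than d; i.e., every one of the m_W bins contains items of total at least d. -/
/-!
If some bin ends below `d`, then, since bins only grow, every item was put into a bin whose level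
was below `d`, so it raised that bin's excess over `2 d` by at most its own excess over `d`. Hence
the excesses over `2 d` sum to at most `∑ (aᵢ - d)` over the large items, and the total content is
less than `2 m d` plus that sum, the bin below `d` accounting for the strict inequality.
-/

/-- A run of Dual Worst Fit over `m` bins on the item list `items`:
    each arriving item is placed into a bin of currently smallest total,
    and `final` is the resulting vector of bin contents. -/
def IsDWFRun (m : ℕ) (items : List ℝ) (final : Fin m → ℝ) : Prop :=
  ∃ s : ℕ → Fin m → ℝ,
    s 0 = (fun _ => 0) ∧
    (∀ i, i < items.length →
      ∃ j : Fin m, (∀ k, s i j ≤ s i k) ∧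
        s (i + 1) = Function.update (s i) j (s i j + items.getD i 0)) ∧
    final = s items.length

open Finset

theorem Finset.sum_univ_update_add_apply {ι M : Type*} [Fintype ι] [DecidableEq ι]
    [AddCommMonoid M] (f : ι → M) (j : ι) (v : M) :
    ∑ k, Function.update f j v k + f j = ∑ k, f k + v := by
  rw [sum_update_of_mem (mem_univ j), sum_eq_add_sum_sdiff_singleton_of_mem (mem_univ j) f]
  abel

theorem List.sum_map_max_sub_zero (d : ℝ) (l : List ℝ) :
    (l.map fun v => max (v - d) 0).sum = ((l.filter fun v => decide (d ≤ v)).map (· - d)).sum := by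
  induction l with
  | nil => rfl
  | cons v l ih =>
    by_cases hv : d ≤ v
    · simp [hv, ih]
    · simp [hv, ih, (sub_neg.mpr (not_le.mp hv)).le]

def IsDWFStep {ι : Type*} [DecidableEq ι] (x y : ι → ℝ) (a : ℝ) : Prop :=
  ∃ j, (∀ k, x j ≤ x k) ∧ y = Function.update x j (x j + a)

namespace IsDWFStep

variable {ι : Type*} [DecidableEq ι] {x y : ι → ℝ} {a : ℝ}

theorem sum_eq [Fintype ι] (h : IsDWFStep x y a) : ∑ k, y k = ∑ k, x k + a := by
  obtain ⟨j, -, rfl⟩ := h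
  linarith [sum_univ_update_add_apply x j (x j + a)]

theorem le (h : IsDWFStep x y a) (ha : 0 ≤ a) : x ≤ y := by
  obtain ⟨j, -, rfl⟩ := h
  intro k
  rcases eq_or_ne k j with rfl | hk
  · simpa using ha
  · rw [Function.update_of_ne hk]

theorem sum_excess_le [Fintype ι] (h : IsDWFStep x y a) {d : ℝ} (hd : 0 ≤ d) {j₀ : ι}
    (hj₀ : x j₀ < d) :
    ∑ k, max (y k - 2 * d) 0 ≤ ∑ k, max (x k - 2 * d) 0 + max (a - d) 0 := by
  obtain ⟨j, hmin, rfl⟩ := h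
  have hj : x j < d := (hmin j₀).trans_lt hj₀
  have hupd := sum_univ_update_add_apply (fun k => max (x k - 2 * d) 0) j
    (max (x j + a - 2 * d) 0)
  simp only [Function.apply_update (fun _ t => max (t - 2 * d) 0) x j (x j + a)]
  have hgain : max (x j + a - 2 * d) 0 ≤ max (a - d) 0 := max_le_max (by linarith) le_rfl
  have hno_excess : max (x j - 2 * d) 0 = 0 := max_eq_right (by linarith)
  linarith

end IsDWFStep

def IsDWFTrace {ι : Type*} [DecidableEq ι] (items : List ℝ) (s : ℕ → ι → ℝ) : Prop :=
  ∀ i < items.length, IsDWFStep (s i) (s (i + 1)) (items.getD i 0)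

namespace IsDWFTrace

variable {ι : Type*} [DecidableEq ι] {items : List ℝ} {s : ℕ → ι → ℝ}

theorem sum_eq_sum_take [Fintype ι] (h : IsDWFTrace items s) (hs₀ : s 0 = 0) :
    ∀ i ≤ items.length, ∑ k, s i k = (items.take i).sum
  | 0, _ => by simp [hs₀]
  | i + 1, (hi : i < items.length) => by
    rw [(h i hi).sum_eq, h.sum_eq_sum_take hs₀ i hi.le, List.sum_take_succ items i hi,
      List.getD_eq_getElem]

theorem le_of_le (h : IsDWFTrace items s) (hnn : ∀ v ∈ items, 0 ≤ v) {i j : ℕ} (hij : i ≤ j)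
    (hj : j ≤ items.length) : s i ≤ s j := by
  induction j, hij using Nat.le_induction with
  | base => exact le_rfl
  | succ j hij ih =>
    have hj' : j < items.length := hj
    exact (ih hj'.le).trans <| (h j hj').le <|
      List.getD_eq_getElem items 0 hj' ▸ hnn _ (List.getElem_mem hj')

theorem sum_excess_le [Fintype ι] (h : IsDWFTrace items s) (hs₀ : s 0 = 0) {d : ℝ} (hd : 0 ≤ d)
    {j₀ : ι} (hlow : ∀ i < items.length, s i j₀ < d) :
    ∀ i ≤ items.length,
      ∑ k, max (s i k - 2 * d) 0 ≤ ((items.take i).map fun v => max (v - d) 0).sum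
  | 0, _ => by simp [hs₀, hd]
  | i + 1, (hi : i < items.length) => by
    rw [List.map_take, List.sum_take_succ _ _ (by simpa using hi), List.getElem_map,
      ← List.getD_eq_getElem items 0 hi, ← List.map_take]
    exact ((h i hi).sum_excess_le hd (hlow i hi)).trans <| by
      gcongr; exact h.sum_excess_le hs₀ hd hlow i hi.le

end IsDWFTrace

theorem stmt7_general (d : ℝ) (hd : 0 < d)
    (m_W : ℕ) (items : List ℝ)
    (hpos : ∀ v ∈ items, 0 < v)
    (hSW : 2 * m_W * d +
        ((items.filter fun v => decide (d ≤ v)).map fun v => v - d).sum ≤ items.sum)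
    (final : Fin m_W → ℝ) (hrun : IsDWFRun m_W items final) :
    ∀ j, d ≤ final j := by
  obtain ⟨s, hs₀, htrace, rfl⟩ := hrun
  replace htrace : IsDWFTrace items s := htrace
  intro j₀
  by_contra! hj₀
  have hlow : ∀ i < items.length, s i j₀ < d := fun i hi =>
    (htrace.le_of_le (fun v hv => (hpos v hv).le) hi.le le_rfl j₀).trans_lt hj₀
  have htotal := htrace.sum_eq_sum_take hs₀ _ le_rfl
  have hexcess := htrace.sum_excess_le hs₀ hd.le hlow _ le_rfl
  rw [List.take_length] at htotal hexcess
  rw [List.sum_map_max_sub_zero] at hexcess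
  have hlt : ∑ k, s items.length k < ∑ k, (2 * d + max (s items.length k - 2 * d) 0) :=
    sum_lt_sum (fun k _ => by linarith [le_max_left (s items.length k - 2 * d) 0])
      ⟨j₀, mem_univ _, by linarith [le_max_right (s items.length j₀ - 2 * d) 0]⟩
  rw [sum_add_distrib, sum_const, card_univ, Fintype.card_fin, nsmul_eq_mul] at hlt
  linarith

theorem stmt7 (d d' : ℝ) (hd : 0 < d) (hdd' : d ≤ d')
    (m_W : ℕ) (items : List ℝ)
    (hpos : ∀ v ∈ items, 0 < v) (hlt : ∀ v ∈ items, v < d')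
    (hbig : (items.filter fun v => decide (d ≤ v)).length < m_W)
    (hSW : 2 * m_W * d +
        ((items.filter fun v => decide (d ≤ v)).map fun v => v - d).sum ≤ items.sum)
    (final : Fin m_W → ℝ) (hrun : IsDWFRun m_W items final) :
    ∀ j, d ≤ final j :=
  stmt7_general d hd m_W items hpos hSW final hrun
end

section
/- Let d, ε be reals with d ≥ ε > 0 and ε sufficiently small, let b satisfy 1/2^{b/2} < ε (so 1/2^b < ε²), and let m_R, m_B, m_RB, x_B, e_B be nonnegative reals with m_B = x_B + ⌊e_B⌋_b, ⌊m_B⌋_b ≥ (1−ε)m_B, ⌊e_B⌋_b ≥ (1−ε)e_B, x_B + e_B = m_RB, ⌊m_R⌋_b ≤ m_R, and m = ⌈(1+ε)m_R⌉. Define d' satisfying d ≤ d' ≤ d + 1/2^b and m_W = ⌊m_R⌋_b − ⌊m_B⌋_b. Then 2d'·m_W ≤ d(2m − m_RB). -/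
/-!
Rounding costs at most a factor `1 - ε` at each of the two roundings that produce `⌊m_B⌋_b`,
so `⌊m_R⌋_b - ⌊m_B⌋_b ≤ m_R - (1 - ε)² m_RB`. The hypothesis on `b` gives `d' ≤ d + ε² ≤ d (1 + ε)`,
and for `ε < 1/4` we have `2 (1 - ε)² ≥ 1`, which absorbs the `m_RB` term.
-/

namespace Real

lemma one_div_two_pow_lt_sq {b : ℕ} {ε : ℝ} (h : 1 / (2 : ℝ) ^ ((b : ℝ) / 2) < ε) :
    1 / (2 : ℝ) ^ b < ε ^ 2 := by
  have hsq : ((2 : ℝ) ^ ((b : ℝ) / 2)) ^ 2 = 2 ^ b := by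
    rw [← Real.rpow_mul_natCast (by norm_num), Nat.cast_ofNat, div_mul_cancel₀ _ two_ne_zero,
      Real.rpow_natCast]
  rw [← hsq, ← one_div_pow]
  exact pow_lt_pow_left₀ h (by positivity) two_ne_zero

end Real

lemma one_sub_sq_mul_add_le {ε x e y m z : ℝ} (hε₀ : 0 ≤ ε) (hε : ε ≤ 1) (hx : 0 ≤ x)
    (hm : m = x + y) (hz : (1 - ε) * m ≤ z) (hy : (1 - ε) * e ≤ y) :
    (1 - ε) ^ 2 * (x + e) ≤ z := by
  have h1ε : 0 ≤ 1 - ε := by linarith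
  calc (1 - ε) ^ 2 * (x + e) = (1 - ε) * ((1 - ε) * x + (1 - ε) * e) := by ring
    _ ≤ (1 - ε) * (x + y) := by
        gcongr
        exact mul_le_of_le_one_left hx (by linarith)
    _ ≤ z := hm ▸ hz

lemma two_mul_mul_le_of_le_one_sub_sq {d d' ε w m r : ℝ} (hd : 0 ≤ d) (hdd' : d ≤ d')
    (hd' : d' ≤ d * (1 + ε)) (hε : 1 ≤ 2 * (1 - ε) ^ 2) (hm : 0 ≤ m) (hr : 0 ≤ r)
    (hw : w ≤ m - (1 - ε) ^ 2 * r) :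
    2 * d' * w ≤ d * (2 * ((1 + ε) * m) - r) := by
  calc 2 * d' * w ≤ 2 * d' * m - d' * (2 * (1 - ε) ^ 2) * r := by
        linear_combination mul_le_mul_of_nonneg_left hw (by linarith : 0 ≤ 2 * d')
    _ ≤ 2 * (d * (1 + ε)) * m - d * 1 * r := by
        gcongr
        linarith
    _ = d * (2 * ((1 + ε) * m) - r) := by ring

theorem stmt8 :
    ∃ ε₀ : ℝ, 0 < ε₀ ∧
      ∀ (b : ℕ) (d ε d' m_R m_B m_RB x_B e_B dnmR dnmB dneB : ℝ),
        0 < ε → ε < ε₀ → ε ≤ d →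
        1 / (2 : ℝ) ^ ((b : ℝ) / 2) < ε →
        0 ≤ m_R → 0 ≤ m_B → 0 ≤ m_RB → 0 ≤ x_B → 0 ≤ e_B →
        m_B = x_B + dneB →
        (1 - ε) * m_B ≤ dnmB → dnmB ≤ m_B →
        (1 - ε) * e_B ≤ dneB → dneB ≤ e_B →
        x_B + e_B = m_RB →
        dnmR ≤ m_R →
        d ≤ d' → d' ≤ d + 1 / 2 ^ b →
        2 * d' * (dnmR - dnmB) ≤ d * (2 * ((⌈(1 + ε) * m_R⌉ : ℤ) : ℝ) - m_RB) := by
  refine ⟨1 / 4, by norm_num, ?_⟩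
  intro b d ε d' m_R m_B m_RB x_B e_B dnmR dnmB dneB hε hε₀ hεd hb hmR _ hmRB hxB _ hmB hdnmB _
    hdneB _ hxe hdnmR hdd' hd'
  have hd : 0 ≤ d := by linarith
  have hd'_le : d' ≤ d * (1 + ε) := by
    nlinarith [Real.one_div_two_pow_lt_sq hb]
  have hrounding : (1 - ε) ^ 2 * m_RB ≤ dnmB :=
    hxe ▸ one_sub_sq_mul_add_le hε.le (by linarith) hxB hmB hdnmB hdneB
  calc 2 * d' * (dnmR - dnmB) ≤ d * (2 * ((1 + ε) * m_R) - m_RB) :=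
        two_mul_mul_le_of_le_one_sub_sq hd hdd' hd'_le (by nlinarith) hmR hmRB (by linarith)
    _ ≤ d * (2 * ((⌈(1 + ε) * m_R⌉ : ℤ) : ℝ) - m_RB) := by
        gcongr
        exact Int.le_ceil _
end
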